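/- Let E be a real inner product space, let B : E → E → ℝ be a bilinear form, let u ∈ E with ‖u‖ = 1, let t ∈ (0, π/2), and let a > 0. If B(v, v) ≥ cot t · (‖v‖² − ⟨u, v⟩²) for every v ∈ E, then for every v ∈ E, a·(cos t)^{−a}·tan t · B(v, v) + (a²·(cos t)^{−a}·tan² t + a·(cos t)^{−a−2})·⟨u, v⟩² ≥ a·(cos t)^{−a}·‖v‖² + a·(a + 1)·(cos t)^{−a}·tan² t·⟨u, v⟩². -/

import Mathlib

open Real

lemma cos_rpow_neg_sub_two {t : ℝ} (hc : cos t ≠ 0) (a : ℝ) :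
    cos t ^ (-a - 2) = cos t ^ (-a) * (tan t ^ 2 + 1) := by
  rw [show (2 : ℝ) = ((2 : ℕ) : ℝ) by norm_num, rpow_sub_natCast hc, div_eq_mul_inv,
    ← inv_one_add_tan_sq hc, inv_inv, add_comm]

lemma le_tan_mul_of_cot_mul_le {t q b : ℝ} (htan : 0 < tan t) (h : cos t / sin t * q ≤ b) :
    q ≤ tan t * b := by
  rwa [← inv_div, ← tan_eq_sin_div_cos, inv_mul_le_iff₀ htan] at h

theorem stmt_8_general {E : Type*} [NormedAddCommGroup E] [InnerProductSpace ℝ E]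
    (B : E →ₗ[ℝ] E →ₗ[ℝ] ℝ) (u : E) (t : ℝ)
    (ht : t ∈ Set.Ioo (0 : ℝ) (π / 2)) (a : ℝ) (ha : 0 < a)
    (hB : ∀ v : E, B v v ≥ (Real.cos t / Real.sin t) *
      (‖v‖ ^ 2 - (inner ℝ u v : ℝ) ^ 2)) :
    ∀ v : E,
      a * Real.cos t ^ (-a) * Real.tan t * B v v
        + (a ^ 2 * Real.cos t ^ (-a) * Real.tan t ^ 2
            + a * Real.cos t ^ (-a - 2)) * (inner ℝ u v : ℝ) ^ 2 ≥
      a * Real.cos t ^ (-a) * ‖v‖ ^ 2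
        + a * (a + 1) * Real.cos t ^ (-a) * Real.tan t ^ 2 *
            (inner ℝ u v : ℝ) ^ 2 := by
  intro v
  have hc : 0 < cos t := cos_pos_of_mem_Ioo ⟨by linarith [pi_pos, ht.1], ht.2⟩
  have hBv : ‖v‖ ^ 2 - inner ℝ u v ^ 2 ≤ tan t * B v v :=
    le_tan_mul_of_cot_mul_le (tan_pos_of_pos_of_lt_pi_div_two ht.1 ht.2) (hB v)
  have hP : 0 ≤ a * cos t ^ (-a) := by positivity
  rw [cos_rpow_neg_sub_two hc.ne']
  -- the `⟪u, v⟫²` terms now cancel, leaving `a cos⁻ᵃ t` times `hBv`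
  linear_combination mul_le_mul_of_nonneg_left hBv hP

/-- Pointwise linear-algebra content of the Hessian estimate for
`(sec ρ)^a`: if a bilinear form `B` satisfies the Hessian comparison
`B(v,v) ≥ cot t·(‖v‖² − ⟨u,v⟩²)` for a unit vector `u`, `t ∈ (0, π/2)`
and `a > 0`, then for all `v`,
`a·(cos t)^{−a}·tan t·B(v,v) + (a²·(cos t)^{−a}·tan² t + a·(cos t)^{−a−2})·⟨u,v⟩²
  ≥ a·(cos t)^{−a}·‖v‖² + a·(a+1)·(cos t)^{−a}·tan² t·⟨u,v⟩²`. -/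
theorem stmt_8 {E : Type*} [NormedAddCommGroup E] [InnerProductSpace ℝ E]
    (B : E →ₗ[ℝ] E →ₗ[ℝ] ℝ) (u : E) (hu : ‖u‖ = 1) (t : ℝ)
    (ht : t ∈ Set.Ioo (0 : ℝ) (π / 2)) (a : ℝ) (ha : 0 < a)
    (hB : ∀ v : E, B v v ≥ (Real.cos t / Real.sin t) *
      (‖v‖ ^ 2 - (inner ℝ u v : ℝ) ^ 2)) :
    ∀ v : E,
      a * Real.cos t ^ (-a) * Real.tan t * B v v
        + (a ^ 2 * Real.cos t ^ (-a) * Real.tan t ^ 2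
            + a * Real.cos t ^ (-a - 2)) * (inner ℝ u v : ℝ) ^ 2 ≥
      a * Real.cos t ^ (-a) * ‖v‖ ^ 2
        + a * (a + 1) * Real.cos t ^ (-a) * Real.tan t ^ 2 *
            (inner ℝ u v : ℝ) ^ 2 :=
  stmt_8_general B u t ht a ha hB
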